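/- Let N be a sorting network with n levels. The contact graphs of all pseudoline arrangements supported by N induce the same partition of the vertex set {1,…,n} into connected components. -/

import Mathlib

open Finset
open scoped Classical Pointwise

namespace BrickP

/-! ### Networks and pseudoline arrangements

A network with `n` levels (labeled `0,…,n-1` from bottom to top) and `m` commutators
(labeled `0,…,m-1` from left to right) is encoded by a word `N : Fin m → Fin (n-1)`:
the `j`-th commutator joins levels `(N j).1` and `(N j).1 + 1`.
A pseudoline arrangement supported by `N` is encoded by its set `C` of crossings:
the word of adjacent transpositions read at the positions of `C` must be a reduced
expression of the longest element `w₀` of the symmetric group, i.e. its product is `w₀`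
and its length is `n.choose 2`.  The contacts are the commutators not in `C`. -/

/-- The adjacent transposition of `Fin n` exchanging the levels `i` and `i+1`. -/
def adjT (n : ℕ) (i : Fin (n - 1)) : Equiv.Perm (Fin n) :=
  Equiv.swap ⟨i.1, by have := i.2; omega⟩ ⟨i.1 + 1, by have := i.2; omega⟩

/-- The longest element of the symmetric group on `Fin n`: the order-reversing permutation. -/
def w0 (n : ℕ) : Equiv.Perm (Fin n) := Fin.revPerm

/-- `C` is the crossing set of a pseudoline arrangement supported by the network `N`. -/
def IsArr (n : ℕ) {m : ℕ} (N : Fin m → Fin (n - 1)) (C : Finset (Fin m)) : Prop :=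
  C.card = n.choose 2 ∧
    (((List.finRange m).filter (fun j => j ∈ C)).map (fun j => adjT n (N j))).prod = w0 n

instance (n : ℕ) {m : ℕ} (N : Fin m → Fin (n - 1)) : DecidablePred (IsArr n N) := fun C => by
  unfold IsArr; infer_instance

/-- `statePerm n N C t i` is the level occupied by the `i`-th pseudoline of the arrangement
with crossing set `C` after the first `t` commutators of the network `N`. -/
def statePerm (n : ℕ) {m : ℕ} (N : Fin m → Fin (n - 1)) (C : Finset (Fin m)) :
    ℕ → Equiv.Perm (Fin n)
  | 0 => 1
  | t + 1 =>
    (if h : t < m then (if (⟨t, h⟩ : Fin m) ∈ C then adjT n (N ⟨t, h⟩) else 1) else 1) *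
      statePerm n N C t

/-- The `j`-th commutator has another commutator at the same level gap to its right;
the brick of the network associated to `j` is the bounded cell whose left wall is `j`. -/
def IsBrick {n m : ℕ} (N : Fin m → Fin (n - 1)) (j : Fin m) : Prop :=
  ∃ j' : Fin m, j < j' ∧ N j' = N j

instance {n m : ℕ} (N : Fin m → Fin (n - 1)) : DecidablePred (IsBrick N) := fun j => by
  unfold IsBrick; infer_instance

/-- The `i`-th pseudoline of the arrangement `C` passes above the brick with left wall `j`
(equivalently, above the commutator `j`). -/
def Above (n : ℕ) {m : ℕ} (N : Fin m → Fin (n - 1)) (C : Finset (Fin m))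
    (i : Fin n) (j : Fin m) : Prop :=
  (N j).1 < (statePerm n N C (j.1 + 1) i).1

instance (n : ℕ) {m : ℕ} (N : Fin m → Fin (n - 1)) (C : Finset (Fin m)) (i : Fin n) (j : Fin m) :
    Decidable (Above n N C i j) := by unfold Above; infer_instance

/-- The brick vector of an arrangement: its `i`-th coordinate is the number of bricks of the
network lying below the `i`-th pseudoline. -/
noncomputable def brickVector (n : ℕ) {m : ℕ} (N : Fin m → Fin (n - 1)) (C : Finset (Fin m)) :
    Fin n → ℝ :=
  fun i => ((univ.filter (fun j : Fin m => IsBrick N j ∧ Above n N C i j)).card : ℝ)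

/-- The brick polytope of a network: the convex hull of the brick vectors of all pseudoline
arrangements supported by it. -/
noncomputable def brickPolytope (n : ℕ) {m : ℕ} (N : Fin m → Fin (n - 1)) : Set (Fin n → ℝ) :=
  convexHull ℝ {x | ∃ C, IsArr n N C ∧ brickVector n N C = x}

/-! ### The contact graph -/

/-- The source of the arc of the contact graph associated to the contact `j`:
the pseudoline passing above the contact. -/
def arcSrc (n : ℕ) {m : ℕ} (N : Fin m → Fin (n - 1)) (C : Finset (Fin m)) (j : Fin m) : Fin n :=
  (statePerm n N C (j.1 + 1))⁻¹ ⟨(N j).1 + 1, by have := (N j).2; omega⟩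

/-- The target of the arc of the contact graph associated to the contact `j`:
the pseudoline passing below the contact. -/
def arcTgt (n : ℕ) {m : ℕ} (N : Fin m → Fin (n - 1)) (C : Finset (Fin m)) (j : Fin m) : Fin n :=
  (statePerm n N C (j.1 + 1))⁻¹ ⟨(N j).1, by have := (N j).2; omega⟩

/-- The contact graph of an arrangement, as the multiset of its arcs (a directed multigraph
on the vertex set `Fin n`). -/
def contactMG (n : ℕ) {m : ℕ} (N : Fin m → Fin (n - 1)) (C : Finset (Fin m)) :
    Multiset (Fin n × Fin n) :=
  (univ.filter (fun j : Fin m => j ∉ C)).val.map (fun j => (arcSrc n N C j, arcTgt n N C j))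

/-- There is an arc from `a` to `b` in the contact graph of the arrangement `C`. -/
def ArcRel (n : ℕ) {m : ℕ} (N : Fin m → Fin (n - 1)) (C : Finset (Fin m)) (a b : Fin n) : Prop :=
  ∃ j : Fin m, j ∉ C ∧ arcSrc n N C j = a ∧ arcTgt n N C j = b

/-- `a` and `b` lie in the same connected component of the contact graph of `C`. -/
def ConnRel (n : ℕ) {m : ℕ} (N : Fin m → Fin (n - 1)) (C : Finset (Fin m)) (a b : Fin n) : Prop :=
  Relation.ReflTransGen (fun u v => ArcRel n N C u v ∨ ArcRel n N C v u) a b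

/-- A network is irreducible when the contact graphs of all supported arrangements
are connected. -/
def Irreducible (n : ℕ) {m : ℕ} (N : Fin m → Fin (n - 1)) : Prop :=
  ∀ C, IsArr n N C → ∀ a b : Fin n, ConnRel n N C a b

/-- The contact graph of the arrangement `C` is an acyclic directed multigraph. -/
def AcyclicArcs (n : ℕ) {m : ℕ} (N : Fin m → Fin (n - 1)) (C : Finset (Fin m)) : Prop :=
  ∀ a : Fin n, ¬ Relation.TransGen (ArcRel n N C) a a

/-! ### Polyhedral notions -/

/-- Dimension of a subset of `ℝⁿ`: the rank of the direction of its affine span. -/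
noncomputable def dimOf {n : ℕ} (s : Set (Fin n → ℝ)) : ℕ :=
  Module.finrank ℝ (affineSpan ℝ s).direction

/-- The cone positively spanned by a set of vectors. -/
def coneOf {n : ℕ} (S : Set (Fin n → ℝ)) : Set (Fin n → ℝ) :=
  {x | ∃ (k : ℕ) (c : Fin k → ℝ) (v : Fin k → Fin n → ℝ),
      (∀ i, 0 ≤ c i) ∧ (∀ i, v i ∈ S) ∧ x = ∑ i, c i • v i}

/-- Standard scalar product on `Fin n → ℝ`. -/
def dotp {n : ℕ} (u x : Fin n → ℝ) : ℝ := ∑ i, u i * x i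

/-- The face of `P` minimizing the linear form `⟨u, ·⟩`. -/
def minFace {n : ℕ} (P : Set (Fin n → ℝ)) (u : Fin n → ℝ) : Set (Fin n → ℝ) :=
  {x | x ∈ P ∧ ∀ y ∈ P, dotp u x ≤ dotp u y}

/-- `u` is a normal vector of a facet of `P` (facet = face of codimension 1), with the
convention that the facet is the subset of `P` minimizing `⟨u, ·⟩`. -/
def IsFacetNormal {n : ℕ} (P : Set (Fin n → ℝ)) (u : Fin n → ℝ) : Prop :=
  u ≠ 0 ∧ (minFace P u).Nonempty ∧ dimOf (minFace P u) + 1 = dimOf P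

/-- `F` is a nonempty face of dimension `k` of the convex set `P`. -/
def IsKFace {n : ℕ} (P : Set (Fin n → ℝ)) (k : ℕ) (F : Set (Fin n → ℝ)) : Prop :=
  IsExtreme ℝ P F ∧ Convex ℝ F ∧ F.Nonempty ∧ dimOf F = k

/-- The characteristic vector of a subset of coordinates. -/
def charVec {n : ℕ} (V : Finset (Fin n)) : Fin n → ℝ := fun i => if i ∈ V then 1 else 0

/-! ### Directed cuts -/

/-- The arcs of the contact graph of `C` crossing the vertex partition `(Vᶜ, V)`. -/
def cutArcs (n : ℕ) {m : ℕ} (N : Fin m → Fin (n - 1)) (C : Finset (Fin m)) (V : Finset (Fin n)) :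
    Set (Fin n × Fin n) :=
  {p | ArcRel n N C p.1 p.2 ∧ ((p.1 ∈ V ∧ p.2 ∉ V) ∨ (p.1 ∉ V ∧ p.2 ∈ V))}

/-- `(Vᶜ, V)` is a minimal directed cut of the contact graph of `C`, with sink set `V`:
all crossing arcs are directed towards `V` and the set of crossing arcs is
inclusion-minimal among edge cuts. -/
def MinDirCut (n : ℕ) {m : ℕ} (N : Fin m → Fin (n - 1)) (C : Finset (Fin m))
    (V : Finset (Fin n)) : Prop :=
  V.Nonempty ∧ V ≠ univ ∧ (∀ a b, ArcRel n N C a b → ¬(a ∈ V ∧ b ∉ V)) ∧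
    ∀ W : Finset (Fin n), W.Nonempty → W ≠ univ →
      cutArcs n N C W ⊆ cutArcs n N C V → cutArcs n N C W = cutArcs n N C V

/-! ### The simplicial complex `Δ(N)` and the face maps `Φ`, `Ψ` -/

/-- `γ` is a face of the simplicial complex `Δ(N)`: the network obtained by erasing the
commutators of `γ` is still sorting, i.e. some supported arrangement has all of `γ`
among its contacts. -/
def IsFaceOfCplx (n : ℕ) {m : ℕ} (N : Fin m → Fin (n - 1)) (γ : Finset (Fin m)) : Prop :=
  ∃ C, IsArr n N C ∧ Disjoint γ C

/-- `Φ` associates to `X ⊆ ℝⁿ` the set of commutators of `N` which are contacts in all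
supported arrangements whose brick vector lies in `X`. -/
def PhiMap (n : ℕ) {m : ℕ} (N : Fin m → Fin (n - 1)) (X : Set (Fin n → ℝ)) : Set (Fin m) :=
  {j | ∀ C, IsArr n N C → brickVector n N C ∈ X → j ∉ C}

/-- `Ψ` associates to a set `γ` of commutators of `N` the convex hull of the brick vectors
of the arrangements of `Arr(N|γ)`, i.e. whose contacts contain `γ`. -/
noncomputable def PsiMap (n : ℕ) {m : ℕ} (N : Fin m → Fin (n - 1)) (γ : Set (Fin m)) :
    Set (Fin n → ℝ) :=
  convexHull ℝ {x | ∃ C, IsArr n N C ∧ (∀ j ∈ γ, j ∉ C) ∧ brickVector n N C = x}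

/-- Same component relation in the contact graph of `C` with the arcs of `γ` removed. -/
def ConnRelAvoid (n : ℕ) {m : ℕ} (N : Fin m → Fin (n - 1)) (C : Finset (Fin m))
    (γ : Set (Fin m)) (a b : Fin n) : Prop :=
  Relation.ReflTransGen
    (fun u v =>
      (∃ j : Fin m, j ∉ C ∧ j ∉ γ ∧ arcSrc n N C j = u ∧ arcTgt n N C j = v) ∨
      (∃ j : Fin m, j ∉ C ∧ j ∉ γ ∧ arcSrc n N C j = v ∧ arcTgt n N C j = u)) a b

/-- One step of the quotient multigraph `Λ^#/(Λ^#∖γ^#)`: an arc of `γ^#` between the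
components of `a` and `b` in `Λ^#∖γ^#`. -/
def QStep (n : ℕ) {m : ℕ} (N : Fin m → Fin (n - 1)) (C : Finset (Fin m)) (γ : Set (Fin m))
    (a b : Fin n) : Prop :=
  ∃ a' b' : Fin n, ConnRelAvoid n N C γ a a' ∧
    (∃ j : Fin m, j ∉ C ∧ j ∈ γ ∧ arcSrc n N C j = a' ∧ arcTgt n N C j = b') ∧
    ConnRelAvoid n N C γ b' b

/-- A set `γ` of commutators of `N` is `k`-admissible. -/
def KAdmissible (n : ℕ) {m : ℕ} (N : Fin m → Fin (n - 1)) (γ : Set (Fin m)) (k : ℕ) : Prop :=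
  ∃ C, IsArr n N C ∧ (∀ j ∈ γ, j ∉ C) ∧
    {S : Set (Fin n) | ∃ a, S = {b | ConnRelAvoid n N C γ a b}}.ncard = n - k ∧
    ∀ a, ¬ Relation.TransGen (QStep n N C γ) a a

/-! ### Restrictions of networks -/

/-- The pseudoline of the arrangement `C` entering the commutator `j` from below. -/
def pLow (n : ℕ) {m : ℕ} (N : Fin m → Fin (n - 1)) (C : Finset (Fin m)) (j : Fin m) : Fin n :=
  (statePerm n N C j.1)⁻¹ ⟨(N j).1, by have := (N j).2; omega⟩

/-- The pseudoline of the arrangement `C` entering the commutator `j` from above. -/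
def pHigh (n : ℕ) {m : ℕ} (N : Fin m → Fin (n - 1)) (C : Finset (Fin m)) (j : Fin m) : Fin n :=
  (statePerm n N C j.1)⁻¹ ⟨(N j).1 + 1, by have := (N j).2; omega⟩

/-- `U` is a connected component of the contact graph of the arrangement `C`. -/
def IsComp (n : ℕ) {m : ℕ} (N : Fin m → Fin (n - 1)) (C : Finset (Fin m))
    (U : Finset (Fin n)) : Prop :=
  ∃ a : Fin n, U = univ.filter (fun b => ConnRel n N C a b)

/-- The commutators of `N` whose two incident pseudolines (w.r.t. the arrangement `C`)
both belong to `U`. -/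
def commsIn (n : ℕ) {m : ℕ} (N : Fin m → Fin (n - 1)) (C : Finset (Fin m))
    (U : Finset (Fin n)) : Finset (Fin m) :=
  univ.filter (fun j => pLow n N C j ∈ U ∧ pHigh n N C j ∈ U)

/-- The restriction of the network `N` to the curves of the pseudolines of `U`
(w.r.t. the arrangement `C`): it has `U.card` levels, its commutators are those of
`commsIn n N C U` in left-right order, and the level of such a commutator is the number
of curves of `U` passing below it. -/
noncomputable def restNet (n : ℕ) {m : ℕ} (N : Fin m → Fin (n - 1)) (C : Finset (Fin m))
    (U : Finset (Fin n)) (j' : Fin (commsIn n N C U).card) : Fin (U.card - 1) := by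
  refine ⟨(U.filter (fun u =>
      (statePerm n N C (((commsIn n N C U).orderIsoOfFin rfl j').1).1 u).1 <
        (N ((commsIn n N C U).orderIsoOfFin rfl j').1).1)).card, ?_⟩
  set j : Fin m := ((commsIn n N C U).orderIsoOfFin rfl j').1 with hj
  have hmem : j ∈ commsIn n N C U := ((commsIn n N C U).orderIsoOfFin rfl j').2
  rw [commsIn, Finset.mem_filter] at hmem
  obtain ⟨-, hL, hH⟩ := hmem
  have hlowlvl : (statePerm n N C j.1 (pLow n N C j)).1 = (N j).1 := by
    unfold pLow; rw [Equiv.Perm.inv_def, Equiv.apply_symm_apply]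
  have hhighlvl : (statePerm n N C j.1 (pHigh n N C j)).1 = (N j).1 + 1 := by
    unfold pHigh; rw [Equiv.Perm.inv_def, Equiv.apply_symm_apply]
  have hne : pLow n N C j ≠ pHigh n N C j := by
    intro h; rw [h, hhighlvl] at hlowlvl; omega
  have hsub : U.filter (fun u => (statePerm n N C j.1 u).1 < (N j).1)
      ⊆ (U.erase (pLow n N C j)).erase (pHigh n N C j) := by
    intro u hu
    rw [Finset.mem_filter] at hu
    rw [Finset.mem_erase, Finset.mem_erase]
    refine ⟨fun h => ?_, fun h => ?_, hu.1⟩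
    · rw [h] at hu; omega
    · rw [h] at hu; omega
  have hcard := Finset.card_le_card hsub
  rw [Finset.card_erase_of_mem (Finset.mem_erase.mpr ⟨hne.symm, hH⟩),
    Finset.card_erase_of_mem hL] at hcard
  have hU2 : 2 ≤ U.card := Finset.one_lt_card.mpr ⟨_, hL, _, hH, hne⟩
  omega

/-- The indices, in the restricted network, of the commutators of `γ` belonging to the
restriction. -/
def restIdx (n : ℕ) {m : ℕ} (N : Fin m → Fin (n - 1)) (C : Finset (Fin m)) (U : Finset (Fin n))
    (γ : Finset (Fin m)) : Finset (Fin (commsIn n N C U).card) :=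
  univ.filter (fun j' => ((commsIn n N C U).orderIsoOfFin rfl j').1 ∈ γ)


/-! ### Kernels of networks, alternating networks, and the polygon of a word -/

/-- The commutators of `N` surviving in the `k`-kernel of `N` (obtained by erasing the
first `k` and last `k` levels together with all commutators incident to them). -/
def kernelComms (n : ℕ) {m : ℕ} (N : Fin m → Fin (n - 1)) (k : ℕ) : Finset (Fin m) :=
  univ.filter (fun j => k ≤ (N j).1 ∧ (N j).1 + k < n - 1)

/-- The `k`-kernel of the network `N`: a network with `n - 2k` levels. -/
def kernelNet (n : ℕ) {m : ℕ} (N : Fin m → Fin (n - 1)) (k : ℕ) :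
    Fin (kernelComms n N k).card → Fin (n - 2 * k - 1) :=
  fun j' => ⟨(N ((kernelComms n N k).orderIsoOfFin rfl j').1).1 - k, by
    have h := ((kernelComms n N k).orderIsoOfFin rfl j').2
    have h2 := (Finset.mem_filter.mp h).2
    omega⟩

/-- The commutator `j` is adjacent to the level `ℓ`. -/
def Touches {n m : ℕ} (N : Fin m → Fin (n - 1)) (ℓ : ℕ) (j : Fin m) : Prop :=
  (N j).1 = ℓ ∨ (N j).1 + 1 = ℓ

/-- The network `N` is alternating: the commutators adjacent to each intermediate level are
alternatively located above and below it. -/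
def IsAlternating {n m : ℕ} (N : Fin m → Fin (n - 1)) : Prop :=
  ∀ ℓ : ℕ, 0 < ℓ → ℓ + 1 < n → ∀ j j' : Fin m, j < j' →
    Touches N ℓ j → Touches N ℓ j' → (∀ j'', j < j'' → j'' < j' → ¬ Touches N ℓ j'') →
    N j ≠ N j'

/-- The `i`-th pseudoline of the arrangement `C` touches the level `ℓ` somewhere. -/
def TouchesLevel (n : ℕ) {m : ℕ} (N : Fin m → Fin (n - 1)) (C : Finset (Fin m))
    (i : Fin n) (ℓ : ℕ) : Prop :=
  ∃ t, t ≤ m ∧ (statePerm n N C t i).1 = ℓ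

/-- `M` is the reduced alternating sorting network `N_x` associated to the word
`x ∈ {a,b}^{n-2}` (where `a` is encoded by `true` and `b` by `false`): it is reduced
(it has `n.choose 2` commutators, all of which are crossings of its unique supported
pseudoline arrangement), alternating, and for each `i` its `(i+1)`-st pseudoline touches
the top level if `x i = a` and the bottom level if `x i = b`. -/
def IsNetworkOfWord (n : ℕ) {m : ℕ} (M : Fin m → Fin (n - 1)) (x : Fin (n - 2) → Bool) : Prop :=
  m = n.choose 2 ∧ IsArr n M Finset.univ ∧ IsAlternating M ∧
    ∀ i : Fin (n - 2),
      (x i = true →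
        TouchesLevel n M Finset.univ ⟨i.1 + 1, by have := i.2; omega⟩ (n - 1)) ∧
      (x i = false →
        TouchesLevel n M Finset.univ ⟨i.1 + 1, by have := i.2; omega⟩ 0)

/-- The position of the vertex `v` of the polygon `P_x` in the cyclic (counterclockwise)
order along the boundary of `P_x`: first `p_1`, then the vertices below the horizontal
axis from left to right, then `p_n`, then the vertices above the axis from right to left. -/
def cpos (n : ℕ) (x : Fin (n - 2) → Bool) (v : Fin n) : ℕ :=
  if v.1 = 0 then 0
  else if v.1 = n - 1 then (univ.filter (fun i : Fin (n - 2) => x i = false)).card + 1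
  else if h : v.1 = 0 ∨ v.1 = n - 1 then 0
  else if x ⟨v.1 - 1, by have := v.2; omega⟩ = false then
    (univ.filter (fun i : Fin (n - 2) => i.1 < v.1 - 1 ∧ x i = false)).card + 1
  else
    (univ.filter (fun i : Fin (n - 2) => x i = false)).card + 2 +
      (univ.filter (fun i : Fin (n - 2) => v.1 - 1 < i.1 ∧ x i = true)).card

/-- `c` lies strictly between `a` and `b`. -/
def Btw (a b c : ℕ) : Prop := min a b < c ∧ c < max a b

/-- The diagonals `d` and `e` of the polygon `P_x` cross (in their interior): exactly one
endpoint of `e` lies on each side of `d`. -/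
def CrossesIn (n : ℕ) (x : Fin (n - 2) → Bool) (d e : Fin n × Fin n) : Prop :=
  (Btw (cpos n x d.1) (cpos n x d.2) (cpos n x e.1) ∧
      ¬ Btw (cpos n x d.1) (cpos n x d.2) (cpos n x e.2)) ∨
  (¬ Btw (cpos n x d.1) (cpos n x d.2) (cpos n x e.1) ∧
      Btw (cpos n x d.1) (cpos n x d.2) (cpos n x e.2))

/-- `d` is an internal diagonal of the polygon `P_x`: its endpoints are distinct and
non-consecutive on the boundary. -/
def IsInternal (n : ℕ) (x : Fin (n - 2) → Bool) (d : Fin n × Fin n) : Prop :=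
  d.1 ≠ d.2 ∧ (cpos n x d.1 + 1) % n ≠ cpos n x d.2 ∧ (cpos n x d.2 + 1) % n ≠ cpos n x d.1

/-- The label of the commutator `j` of a reduced network: the pair of indices of the two
pseudolines of the unique supported arrangement which cross at `j` (smallest first). -/
def commLabel (n : ℕ) {m : ℕ} (M : Fin m → Fin (n - 1)) (j : Fin m) : Fin n × Fin n :=
  (pLow n M Finset.univ j, pHigh n M Finset.univ j)

/-! ### Multitriangulations: valid sequences and the sets `D(σ)` -/

/-- The sequence `0^k σ 0^k ∈ {0,1}^n` obtained by appending `k` zeros before and after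
`σ ∈ {0,1}^(n-2k)` (`1` is encoded by `true` and `0` by `false`). -/
def extSeq (n k : ℕ) (σ : Fin (n - 2 * k) → Bool) (t : Fin n) : Bool :=
  if h : k ≤ t.1 ∧ t.1 < k + (n - 2 * k) then σ ⟨t.1 - k, by omega⟩ else false

/-- The positions of the zeros of the extended sequence `0^k σ 0^k`. -/
def zeroSet (n k : ℕ) (σ : Fin (n - 2 * k) → Bool) : Finset (Fin n) :=
  univ.filter (fun t => extSeq n k σ t = false)

/-- The set `D(σ)` of edges `[ζ_i(σ), ζ_{i+k}(σ)]` of the `n`-gon, where `ζ_i(σ)` denotes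
the position of the `i`-th zero of `0^k σ 0^k`. -/
def DsetP (n k : ℕ) (σ : Fin (n - 2 * k) → Bool) (p : Fin n × Fin n) : Prop :=
  ∃ i : Fin (zeroSet n k σ).card, ∃ hik : i.1 + k < (zeroSet n k σ).card,
    p = (((zeroSet n k σ).orderIsoOfFin rfl i).1,
         ((zeroSet n k σ).orderIsoOfFin rfl ⟨i.1 + k, hik⟩).1)

/-- A sequence of `{0,1}^q` is `k`-valid if it is neither `0^q` nor `1^q` and contains no
factor `1 0^r 1` with `r ≥ k`. -/
def KValid (q k : ℕ) (σ : Fin q → Bool) : Prop :=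
  (∃ i, σ i = true) ∧ (∃ i, σ i = false) ∧
    ¬ ∃ i j : Fin q, i < j ∧ σ i = true ∧ σ j = true ∧
        (∀ t, i < t → t < j → σ t = false) ∧ k ≤ j.1 - i.1 - 1

/-! ### The simplicial complex `Δ_n^k` of multitriangulations -/

/-- `p` encodes a `k`-relevant diagonal of a convex `q`-gon with vertices `0,…,q-1` in
cyclic order: it has at least `k` vertices of the polygon (strictly) on each side. -/
def IsRelevantDiag (q k : ℕ) (p : Fin q × Fin q) : Prop :=
  p.1.1 < p.2.1 ∧ p.1.1 + k + 1 ≤ p.2.1 ∧ k + p.2.1 + 1 ≤ q + p.1.1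

/-- Two diagonals of the convex `q`-gon cross. -/
def DiagCross {q : ℕ} (p e : Fin q × Fin q) : Prop :=
  (p.1.1 < e.1.1 ∧ e.1.1 < p.2.1 ∧ p.2.1 < e.2.1) ∨
  (e.1.1 < p.1.1 ∧ p.1.1 < e.2.1 ∧ e.2.1 < p.2.1)

/-- `γ` is a face of the simplicial complex `Δ_q^k`: a `(k+1)`-crossing-free set of
`k`-relevant diagonals of the convex `q`-gon. -/
def IsFaceDelta (q k : ℕ) (γ : Finset (Fin q × Fin q)) : Prop :=
  (∀ p ∈ γ, IsRelevantDiag q k p) ∧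
    ∀ S ⊆ γ, S.card = k + 1 → ¬ (∀ p ∈ S, ∀ e ∈ S, p ≠ e → DiagCross p e)

/-! Two pseudolines meeting at a contact `j` of an arrangement cross exactly once, at some
commutator `j'`. Exchanging the roles of `j` and `j'` (a flip) yields another arrangement, which
differs from the first one only by exchanging the labels of these two pseudolines between `j`
and `j'`. Since they are adjacent in the contact graph, a flip preserves its connected
components. And any two arrangements are related by flips: at the leftmost commutator which is a
contact of one and a crossing of the other, a flip of the first one makes them agree, and its
other commutator lies further right. -/

end BrickP

lemma List.prod_map_filter_eq_prod_map_ite {α M : Type*} [Monoid M] (p : α → Prop)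
    [DecidablePred p] (f : α → M) (l : List α) :
    ((l.filter (fun a => p a)).map f).prod = (l.map (fun a => if p a then f a else 1)).prod := by
  induction l with
  | nil => rfl
  | cons a l ih => by_cases h : p a <;> simp [h, ih]

lemma Equiv.swap_eq_swap_of_sym2_eq {α : Type*} [DecidableEq α] {a b c d : α}
    (h : s(a, b) = s(c, d)) : Equiv.swap a b = Equiv.swap c d := by
  rcases Sym2.eq_iff.mp h with ⟨rfl, rfl⟩ | ⟨rfl, rfl⟩
  · rfl
  · exact Equiv.swap_comm _ _

lemma Equiv.swap_apply_lt_swap_apply_iff {n : ℕ} {p q x y : Fin n} (hpq : p.1 + 1 = q.1)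
    (hxy : s(x, y) ≠ s(p, q)) :
    (Equiv.swap p q x).1 < (Equiv.swap p q y).1 ↔ x.1 < y.1 := by
  rw [Ne, Sym2.eq_iff] at hxy
  simp only [Equiv.swap_apply_def]
  split_ifs <;> simp_all [Fin.ext_iff] <;> omega

namespace BrickP

section States

variable {n m : ℕ} {N : Fin m → Fin (n - 1)} {C D : Finset (Fin m)} {j : Fin m}

def lowerLevel (n : ℕ) {m : ℕ} (N : Fin m → Fin (n - 1)) (j : Fin m) : Fin n :=
  ⟨(N j).1, by have := (N j).2; omega⟩

def upperLevel (n : ℕ) {m : ℕ} (N : Fin m → Fin (n - 1)) (j : Fin m) : Fin n :=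
  ⟨(N j).1 + 1, by have := (N j).2; omega⟩

def stepPerm (n : ℕ) {m : ℕ} (N : Fin m → Fin (n - 1)) (C : Finset (Fin m)) (t : ℕ) :
    Equiv.Perm (Fin n) :=
  if h : t < m then (if (⟨t, h⟩ : Fin m) ∈ C then adjT n (N ⟨t, h⟩) else 1) else 1

lemma statePerm_succ (t : ℕ) :
    statePerm n N C (t + 1) = stepPerm n N C t * statePerm n N C t := rfl

lemma stepPerm_inv (t : ℕ) : (stepPerm n N C t)⁻¹ = stepPerm n N C t := by
  unfold stepPerm adjT
  split_ifs <;> simp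

lemma stepPerm_of_mem (hj : j ∈ C) :
    stepPerm n N C j.1 = Equiv.swap (lowerLevel n N j) (upperLevel n N j) := by
  simp [stepPerm, hj, adjT, lowerLevel, upperLevel]

lemma stepPerm_of_notMem (hj : j ∉ C) : stepPerm n N C j.1 = 1 := by
  simp [stepPerm, hj]

lemma statePerm_eq_inv_prod (t : ℕ) :
    statePerm n N C t = ((List.range t).map (stepPerm n N C)).prod⁻¹ := by
  induction t with
  | zero => rfl
  | succ t ih =>
    rw [List.range_succ, List.map_append, List.prod_append, statePerm_succ, ih]
    simp [mul_inv_rev, stepPerm_inv]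

lemma w0_inv : (w0 n)⁻¹ = w0 n := by
  rw [w0, Equiv.Perm.inv_def, Fin.revPerm_symm]

lemma isArr_iff_card_and_statePerm :
    IsArr n N C ↔ C.card = n.choose 2 ∧ statePerm n N C m = w0 n := by
  have hmap : (List.finRange m).map (fun j => if j ∈ C then adjT n (N j) else 1) =
      (List.range m).map (stepPerm n N C) := by
    apply List.ext_getElem
    · simp
    · intro i h _
      have him : i < m := by simpa using h
      simp [stepPerm, him]
  rw [IsArr, List.prod_map_filter_eq_prod_map_ite, hmap, statePerm_eq_inv_prod,
    eq_comm (b := w0 n), inv_eq_iff_eq_inv, w0_inv, eq_comm (a := w0 n)]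

lemma statePerm_succ_of_notMem (hj : j ∉ C) :
    statePerm n N C (j.1 + 1) = statePerm n N C j.1 := by
  rw [statePerm_succ, stepPerm_of_notMem hj, one_mul]

lemma statePerm_succ_of_mem (hj : j ∈ C) :
    statePerm n N C (j.1 + 1) =
      Equiv.swap (lowerLevel n N j) (upperLevel n N j) * statePerm n N C j.1 := by
  rw [statePerm_succ, stepPerm_of_mem hj]

lemma swap_levels_mul_statePerm (C : Finset (Fin m)) (j : Fin m) :
    Equiv.swap (lowerLevel n N j) (upperLevel n N j) * statePerm n N C j.1 =
      statePerm n N C j.1 * Equiv.swap (pLow n N C j) (pHigh n N C j) :=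
  Equiv.swap_mul_eq_mul_swap _ _ _

lemma stepPerm_congr {t : ℕ} (h : ∀ ht : t < m, ((⟨t, ht⟩ : Fin m) ∈ C ↔ ⟨t, ht⟩ ∈ D)) :
    stepPerm n N C t = stepPerm n N D t := by
  unfold stepPerm
  split_ifs <;> simp_all

lemma statePerm_congr (t : ℕ) (h : ∀ p : Fin m, p.1 < t → (p ∈ C ↔ p ∈ D)) :
    statePerm n N C t = statePerm n N D t := by
  induction t with
  | zero => rfl
  | succ t ih =>
    rw [statePerm_succ, statePerm_succ, stepPerm_congr fun ht => h ⟨t, ht⟩ (by simp),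
      ih fun p hp => h p (by omega)]

end States

section Crossings

variable {n m : ℕ} {N : Fin m → Fin (n - 1)} {C : Finset (Fin m)} {j : Fin m}

def pairAt (n : ℕ) {m : ℕ} (N : Fin m → Fin (n - 1)) (C : Finset (Fin m)) (j : Fin m) :
    Sym2 (Fin n) :=
  s(pLow n N C j, pHigh n N C j)

lemma pairAt_eq_map (C : Finset (Fin m)) (j : Fin m) :
    pairAt n N C j = s(lowerLevel n N j, upperLevel n N j).map ⇑(statePerm n N C j.1)⁻¹ := rfl

lemma pairAt_congr {D : Finset (Fin m)} (h : ∀ p : Fin m, p < j → (p ∈ C ↔ p ∈ D)) :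
    pairAt n N C j = pairAt n N D j := by
  rw [pairAt_eq_map, pairAt_eq_map, statePerm_congr j.1 h]

lemma pLow_ne_pHigh (C : Finset (Fin m)) (j : Fin m) : pLow n N C j ≠ pHigh n N C j := by
  intro h
  have := congrArg Fin.val ((statePerm n N C j.1)⁻¹.injective h)
  simp at this

lemma statePerm_lt_statePerm_iff (a b : Fin n) (t : ℕ)
    (h : ∀ p ∈ C, p.1 < t → pairAt n N C p ≠ s(a, b)) :
    (statePerm n N C t a).1 < (statePerm n N C t b).1 ↔ a.1 < b.1 := by
  induction t with
  | zero => rfl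
  | succ t ih =>
    refine Iff.trans ?_ (ih fun p hp hpt => h p hp (by omega))
    by_cases hmem : ∃ ht : t < m, (⟨t, ht⟩ : Fin m) ∈ C
    · obtain ⟨ht, hp⟩ := hmem
      rw [show t = (⟨t, ht⟩ : Fin m).1 from rfl, statePerm_succ_of_mem hp, Equiv.Perm.mul_apply,
        Equiv.Perm.mul_apply]
      refine Equiv.swap_apply_lt_swap_apply_iff rfl fun hab => h _ hp (by simp) ?_
      rw [pairAt_eq_map, ← hab, Sym2.map_mk]
      simp
    · have : stepPerm n N C t = 1 := by
        unfold stepPerm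
        split_ifs <;> simp_all
      rw [statePerm_succ, this, one_mul]

lemma exists_pairAt_eq (hC : IsArr n N C) {a b : Fin n} (hab : a ≠ b) :
    ∃ j ∈ C, pairAt n N C j = s(a, b) := by
  by_contra! h
  have hiff := statePerm_lt_statePerm_iff a b m fun p hp _ => h p hp
  rw [(isArr_iff_card_and_statePerm.mp hC).2] at hiff
  have hrev : ∀ x : Fin n, (w0 n x).1 = n - (x.1 + 1) := fun _ => rfl
  rw [hrev, hrev] at hiff
  have := Fin.val_ne_of_ne hab
  omega

lemma pairAt_injOn (hC : IsArr n N C) : Set.InjOn (pairAt n N C) C := by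
  intro j hj j' hj' heq
  refine Finset.inj_on_of_surj_on_of_card_le (s := C)
    (t := univ.filter fun z : Sym2 (Fin n) => ¬ z.IsDiag) (fun j _ => pairAt n N C j)
    (fun j _ => by simpa [pairAt] using pLow_ne_pHigh C j) ?_ ?_ hj hj' heq
  · intro z hz
    induction z using Sym2.ind with
    | h a b =>
      obtain ⟨p, hp, hpab⟩ := exists_pairAt_eq hC (by simpa using hz)
      exact ⟨p, hp, hpab⟩
  · rw [hC.1, ← Fintype.card_subtype, Sym2.card_subtype_not_diag, Fintype.card_fin]

end Crossings

section Flips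

variable {n m : ℕ} {N : Fin m → Fin (n - 1)} {C D : Finset (Fin m)} {j j' : Fin m}

def IsFlip (n : ℕ) {m : ℕ} (N : Fin m → Fin (n - 1)) (C D : Finset (Fin m)) : Prop :=
  ∃ j j', j ∉ C ∧ j' ∈ C ∧ pairAt n N C j' = pairAt n N C j ∧ D = insert j (C.erase j')

lemma statePerm_flip (hj : j ∉ C) (hj' : j' ∈ C) (hpair : pairAt n N C j' = pairAt n N C j)
    (t : ℕ) :
    statePerm n N (insert j (C.erase j')) t =
      if (j.1 < t ∧ t ≤ j'.1) ∨ (j'.1 < t ∧ t ≤ j.1)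
      then statePerm n N C t * Equiv.swap (pLow n N C j) (pHigh n N C j)
      else statePerm n N C t := by
  have hjj' : j.1 ≠ j'.1 := fun h => hj (Fin.ext h ▸ hj')
  have hτ : Equiv.swap (pLow n N C j') (pHigh n N C j') =
      Equiv.swap (pLow n N C j) (pHigh n N C j) :=
    Equiv.swap_eq_swap_of_sym2_eq hpair
  have hj'D : j' ∉ insert j (C.erase j') := by simp [Ne.symm (Fin.val_ne_iff.mp hjj')]
  induction t with
  | zero => rfl
  | succ t ih =>
    rcases eq_or_ne t j.1 with rfl | htj
    · rw [statePerm_succ_of_mem (mem_insert_self _ _), statePerm_succ_of_notMem hj, ih]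
      by_cases hlt : j'.1 < j.1
      · rw [if_pos (by omega), if_neg (by omega), ← mul_assoc, swap_levels_mul_statePerm,
          mul_assoc, Equiv.swap_mul_self, mul_one]
      · rw [if_neg (by omega), if_pos (by omega), swap_levels_mul_statePerm]
    rcases eq_or_ne t j'.1 with rfl | htj'
    · rw [statePerm_succ_of_notMem hj'D, statePerm_succ_of_mem hj', ih,
        swap_levels_mul_statePerm, hτ]
      by_cases hlt : j.1 < j'.1
      · rw [if_pos (by omega), if_neg (by omega)]
      · rw [if_neg (by omega), if_pos (by omega), mul_assoc, Equiv.swap_mul_self, mul_one]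
    · have hstep : stepPerm n N (insert j (C.erase j')) t = stepPerm n N C t :=
        stepPerm_congr fun _ => by
          simp [Fin.ext_iff, htj, htj']
      rw [statePerm_succ, statePerm_succ, hstep, ih]
      split_ifs <;> first | omega | simp [mul_assoc]

lemma isArr_of_isFlip (hC : IsArr n N C) (h : IsFlip n N C D) : IsArr n N D := by
  obtain ⟨j, j', hj, hj', hpair, rfl⟩ := h
  rw [isArr_iff_card_and_statePerm] at hC ⊢
  refine ⟨?_, ?_⟩
  · rw [card_insert_of_notMem (by simp [hj]), card_erase_of_mem hj']
    have := card_pos.mpr ⟨j', hj'⟩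
    omega
  · rw [statePerm_flip hj hj' hpair, if_neg (by omega), hC.2]

end Flips

section Components

variable {n m : ℕ} {N : Fin m → Fin (n - 1)} {C D : Finset (Fin m)} {j j' : Fin m}

lemma inv_statePerm_flip_apply (hj : j ∉ C) (hj' : j' ∈ C)
    (hpair : pairAt n N C j' = pairAt n N C j) (t : ℕ) (x : Fin n) :
    (statePerm n N (insert j (C.erase j')) t)⁻¹ x =
      if (j.1 < t ∧ t ≤ j'.1) ∨ (j'.1 < t ∧ t ≤ j.1)
      then Equiv.swap (pLow n N C j) (pHigh n N C j) ((statePerm n N C t)⁻¹ x)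
      else (statePerm n N C t)⁻¹ x := by
  rw [statePerm_flip hj hj' hpair]
  split_ifs <;> simp [mul_inv_rev]

lemma pairAt_flip (hj : j ∉ C) (hj' : j' ∈ C) (hpair : pairAt n N C j' = pairAt n N C j)
    {p : Fin m} (hp : pairAt n N C p = pairAt n N C j) :
    pairAt n N (insert j (C.erase j')) p = pairAt n N C j := by
  rw [pairAt, pLow, pHigh, inv_statePerm_flip_apply hj hj' hpair,
    inv_statePerm_flip_apply hj hj' hpair]
  split_ifs
  · rw [← Sym2.map_mk, ← pLow, ← pHigh, ← pairAt, hp, pairAt, Sym2.map_mk,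
      Equiv.swap_apply_left, Equiv.swap_apply_right, Sym2.eq_swap]
  · exact hp

lemma IsFlip.symm (h : IsFlip n N C D) : IsFlip n N D C := by
  obtain ⟨j, j', hj, hj', hpair, rfl⟩ := h
  have hne : j' ≠ j := fun h => hj (h ▸ hj')
  refine ⟨j', j, by simp [hne], mem_insert_self _ _, ?_, ?_⟩
  · rw [pairAt_flip hj hj' hpair rfl, pairAt_flip hj hj' hpair hpair]
  · ext p
    by_cases hpj : p = j <;> by_cases hpj' : p = j' <;> simp_all

lemma connRel_symm {a b : Fin n} (h : ConnRel n N C a b) : ConnRel n N C b a := by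
  induction h with
  | refl => exact .refl
  | tail _ hstep ih => exact .head hstep.symm ih

lemma connRel_of_arcRel {a b : Fin n} (h : ArcRel n N C a b) : ConnRel n N C a b :=
  Relation.ReflTransGen.single (Or.inl h)

lemma arcSrc_mem_pairAt (C : Finset (Fin m)) (j : Fin m) : arcSrc n N C j ∈ pairAt n N C j := by
  by_cases hj : j ∈ C
  · change (statePerm n N C (j.1 + 1))⁻¹ (upperLevel n N j) ∈ _
    simp [statePerm_succ_of_mem hj, mul_inv_rev, pairAt, pLow, lowerLevel]
  · rw [arcSrc, statePerm_succ_of_notMem hj]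
    exact Sym2.mem_mk_right _ _

lemma arcTgt_mem_pairAt (C : Finset (Fin m)) (j : Fin m) : arcTgt n N C j ∈ pairAt n N C j := by
  by_cases hj : j ∈ C
  · change (statePerm n N C (j.1 + 1))⁻¹ (lowerLevel n N j) ∈ _
    simp [statePerm_succ_of_mem hj, mul_inv_rev, pairAt, pHigh, upperLevel]
  · rw [arcTgt, statePerm_succ_of_notMem hj]
    exact Sym2.mem_mk_left _ _

lemma connRel_of_mem_pairAt (hj : j ∉ C) {a b : Fin n} (ha : a ∈ pairAt n N C j)
    (hb : b ∈ pairAt n N C j) : ConnRel n N C a b := by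
  have hjoin : ConnRel n N C (arcSrc n N C j) (arcTgt n N C j) :=
    connRel_of_arcRel ⟨j, hj, rfl, rfl⟩
  have hpair : pairAt n N C j = s(arcSrc n N C j, arcTgt n N C j) := by
    rw [arcSrc, arcTgt, statePerm_succ_of_notMem hj, Sym2.eq_swap]
    rfl
  rw [hpair, Sym2.mem_iff] at ha hb
  rcases ha with rfl | rfl <;> rcases hb with rfl | rfl
  exacts [.refl, hjoin, connRel_symm hjoin, .refl]

lemma connRel_swap_apply (hj : j ∉ C) (a : Fin n) :
    ConnRel n N C a (Equiv.swap (pLow n N C j) (pHigh n N C j) a) := by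
  rw [Equiv.swap_apply_def]
  split_ifs with h1 h2
  · exact connRel_of_mem_pairAt hj (h1 ▸ Sym2.mem_mk_left _ _) (Sym2.mem_mk_right _ _)
  · exact connRel_of_mem_pairAt hj (h2 ▸ Sym2.mem_mk_right _ _) (Sym2.mem_mk_left _ _)
  · exact .refl

/-- The new contact `j'` joins the two pseudolines meeting at `j`; any other arc of the flip is
an arc of `C` up to exchanging these two pseudolines, which are adjacent in `C`. -/
lemma connRel_of_arcRel_flip (hj : j ∉ C) (hj' : j' ∈ C)
    (hpair : pairAt n N C j' = pairAt n N C j) {a b : Fin n}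
    (h : ArcRel n N (insert j (C.erase j')) a b) : ConnRel n N C a b := by
  obtain ⟨p, hp, rfl, rfl⟩ := h
  have hshift : ∀ x, ConnRel n N C ((statePerm n N (insert j (C.erase j')) (p.1 + 1))⁻¹ x)
      ((statePerm n N C (p.1 + 1))⁻¹ x) := by
    intro x
    rw [inv_statePerm_flip_apply hj hj' hpair]
    split_ifs
    exacts [connRel_symm (connRel_swap_apply hj _), .refl]
  have hC : ConnRel n N C (arcSrc n N C p) (arcTgt n N C p) := by
    by_cases hpC : p ∈ C
    · obtain rfl : p = j' := by by_contra hpj'; simp_all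
      exact connRel_of_mem_pairAt hj (hpair ▸ arcSrc_mem_pairAt C p)
        (hpair ▸ arcTgt_mem_pairAt C p)
    · exact connRel_of_arcRel ⟨p, hpC, rfl, rfl⟩
  exact ((hshift _).trans hC).trans (connRel_symm (hshift _))

lemma connRel_of_connRel_of_isFlip (h : IsFlip n N C D) {a b : Fin n}
    (hab : ConnRel n N D a b) : ConnRel n N C a b := by
  obtain ⟨j, j', hj, hj', hpair, rfl⟩ := h
  refine Relation.reflTransGen_closed (fun u v huv => ?_) _ _ hab
  rcases huv with huv | hvu
  · exact connRel_of_arcRel_flip hj hj' hpair huv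
  · exact connRel_symm (connRel_of_arcRel_flip hj hj' hpair hvu)

lemma connRel_iff_of_isFlip (h : IsFlip n N C D) (a b : Fin n) :
    ConnRel n N C a b ↔ ConnRel n N D a b :=
  ⟨connRel_of_connRel_of_isFlip h.symm, connRel_of_connRel_of_isFlip h⟩

lemma connRel_iff_of_reflTransGen_isFlip (h : Relation.ReflTransGen (IsFlip n N) C D)
    (a b : Fin n) :
    ConnRel n N C a b ↔ ConnRel n N D a b := by
  induction h with
  | refl => rfl
  | tail _ hflip ih => exact ih.trans (connRel_iff_of_isFlip hflip a b)

end Components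

section FlipGraph

variable {n m : ℕ} {N : Fin m → Fin (n - 1)} {C C' : Finset (Fin m)}

/-- The pseudolines meeting at `j₀` already cross at `j₀` in `C'`, hence, by uniqueness of
crossings in `C'`, they cross in `C` to the right of `j₀`. -/
lemma exists_isFlip_agree_le (hC : IsArr n N C) (hC' : IsArr n N C') {j₀ : Fin m}
    (hagree : ∀ p : Fin m, p < j₀ → (p ∈ C ↔ p ∈ C')) (hj₀ : j₀ ∉ C) (hj₀' : j₀ ∈ C') :
    ∃ D, IsArr n N D ∧ IsFlip n N C D ∧ ∀ p : Fin m, p ≤ j₀ → (p ∈ D ↔ p ∈ C') := by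
  obtain ⟨j', hj', hpair⟩ := exists_pairAt_eq hC (pLow_ne_pHigh C j₀)
  have hlt : j₀ < j' := by
    by_contra! hle
    have hlt : j' < j₀ := lt_of_le_of_ne hle fun h => hj₀ (h ▸ hj')
    refine hlt.ne (pairAt_injOn hC' ((hagree j' hlt).mp hj') hj₀' ?_)
    rw [← pairAt_congr fun p hp => hagree p (hp.trans hlt), hpair, ← pairAt_congr hagree]
    rfl
  have hflip : IsFlip n N C (insert j₀ (C.erase j')) := ⟨j₀, j', hj₀, hj', hpair, rfl⟩
  refine ⟨_, isArr_of_isFlip hC hflip, hflip, fun p hp => ?_⟩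
  rcases hp.lt_or_eq with hp | rfl
  · simp [hp.ne, (hp.trans hlt).ne, hagree p hp]
  · simp [hj₀']

lemma reflTransGen_isFlip_of_agree (t : ℕ) :
    ∀ {C C' : Finset (Fin m)}, IsArr n N C → IsArr n N C' →
      (∀ p : Fin m, p.1 + t < m → (p ∈ C ↔ p ∈ C')) →
        Relation.ReflTransGen (IsFlip n N) C C' := by
  induction t with
  | zero =>
    intro C C' _ _ h
    rw [Finset.ext fun p => h p (by omega)]
  | succ t ih =>
    intro C C' hC hC' h
    by_cases hall : ∀ p : Fin m, p.1 + t < m → (p ∈ C ↔ p ∈ C')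
    · exact ih hC hC' hall
    simp only [not_forall] at hall
    obtain ⟨j₀, hj₀m, hne⟩ := hall
    have hlast : j₀.1 + t + 1 = m := by
      by_contra
      exact hne (h j₀ (by omega))
    have hbelow : ∀ p : Fin m, p < j₀ → (p ∈ C ↔ p ∈ C') := fun p hp => h p (by omega)
    by_cases hj₀ : j₀ ∈ C
    · obtain ⟨D, hD, hflip, hagree⟩ :=
        exists_isFlip_agree_le hC' hC (fun p hp => (hbelow p hp).symm) (by tauto) hj₀
      exact (ih hC hD fun p hp => (hagree p (by omega)).symm).tail hflip.symm
    · obtain ⟨D, hD, hflip, hagree⟩ := exists_isFlip_agree_le hC hC' hbelow hj₀ (by tauto)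
      exact .head hflip (ih hD hC' fun p hp => hagree p (by omega))

lemma reflTransGen_isFlip (hC : IsArr n N C) (hC' : IsArr n N C') :
    Relation.ReflTransGen (IsFlip n N) C C' :=
  reflTransGen_isFlip_of_agree m hC hC' fun p hp => absurd hp (by omega)

end FlipGraph

/-- Let `N` be a sorting network with `n` levels.  The contact graphs of all
pseudoline arrangements supported by `N` induce the same partition of the vertex set
`{1,…,n}` into connected components. -/
theorem contactGraph_components_eq (n m : ℕ) (N : Fin m → Fin (n - 1))
    (C C' : Finset (Fin m)) (hC : IsArr n N C) (hC' : IsArr n N C') :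
    ∀ a b : Fin n, ConnRel n N C a b ↔ ConnRel n N C' a b :=
  connRel_iff_of_reflTransGen_isFlip (reflTransGen_isFlip hC hC')

end BrickP
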